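/- arXiv:0707.1256 — 2 statements merged into one kernel-verified Lean document; each statement's English description precedes it below -/
import Mathlib

section
/- Let h : ℝ → ℝ be smooth, nowhere flat and surjective. Then there exists a piecewise smooth function h♯ : ℝ → ℝ such that h(h♯(x)) = x for all x ∈ ℝ. -/
open Real Set

/-- A smooth function is nowhere flat if some derivative of order `r' ≤ r` (for a
uniform `r`) is nonzero at every point. -/
def NowhereFlat (g : ℝ → ℝ) : Prop :=
  ∃ r : ℕ, 0 < r ∧ ∀ x : ℝ, ∃ r' : ℕ, 0 < r' ∧ r' ≤ r ∧ iteratedDeriv r' g x ≠ 0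

/-- A function `k : ℝ → ℝ` is piecewise smooth if there is a closed, topologically
discrete set `Y ⊆ ℝ` such that on each connected component of `ℝ \ Y` the function `k`
is smooth and extends continuously to the closure of the component. -/
def PiecewiseSmooth (k : ℝ → ℝ) : Prop :=
  ∃ Y : Set ℝ, IsClosed Y ∧ DiscreteTopology Y ∧
    ∀ x ∈ Yᶜ,
      ContDiffOn ℝ (⊤ : ℕ∞) k (connectedComponentIn Yᶜ x) ∧
      ∃ g : ℝ → ℝ, ContinuousOn g (closure (connectedComponentIn Yᶜ x)) ∧
        EqOn g k (connectedComponentIn Yᶜ x)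

/-!
Nowhere flatness makes the critical points of `h` isolated: if some iterated derivative is
nonzero at `w`, Rolle's theorem propagates "no zeros on a punctured neighbourhood of `w`" down
to `h'`. So every value `c` is the endpoint of intervals `[c, d]` and `[a, c]` covered by a
branch of `h` on which `h' ≠ 0` (start at the last point before `h` reaches `c + 1`, resp.
`c - 1`, where `h` is still on the other side of `c`). The inverse of such a branch is
continuous, and smooth inside since its derivative is `1 / h'` at the preimage. A supremum
argument turns these one-sided local sections into a finite partition of each `[n, n + 1]`
into intervals carrying a section; the partition points form a closed discrete set, and the
sections glue along its cells.
-/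

open Filter Topology

lemma eventually_ne_of_eventually_deriv_ne_zero {f : ℝ → ℝ} (hf : Continuous f) {w : ℝ}
    (hd : ∀ᶠ x in 𝓝[≠] w, deriv f x ≠ 0) : ∀ᶠ x in 𝓝[≠] w, f x ≠ f w := by
  obtain ⟨ε, hε, hball⟩ := Metric.mem_nhdsWithin_iff.mp hd
  have hcrit : ∀ ξ, |ξ - w| < ε → ξ ≠ w → deriv f ξ ≠ 0 := fun ξ hξ hξw =>
    hball ⟨by rwa [Metric.mem_ball, Real.dist_eq], hξw⟩
  filter_upwards [Metric.mem_nhdsWithin_iff.mpr ⟨ε, hε, subset_refl _⟩] with x ⟨hx, hxw⟩ hfx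
  rw [Metric.mem_ball, Real.dist_eq] at hx
  rcases lt_or_gt_of_ne hxw with hlt | hgt
  · obtain ⟨ξ, hξ, hξ0⟩ := exists_deriv_eq_zero hlt hf.continuousOn hfx
    exact hcrit ξ (by rw [abs_lt] at hx ⊢; constructor <;> linarith [hξ.1, hξ.2]) hξ.2.ne hξ0
  · obtain ⟨ξ, hξ, hξ0⟩ := exists_deriv_eq_zero hgt hf.continuousOn hfx.symm
    exact hcrit ξ (by rw [abs_lt] at hx ⊢; constructor <;> linarith [hξ.1, hξ.2]) hξ.1.ne' hξ0

lemma eventually_ne_zero_of_iteratedDeriv_ne_zero {k : ℕ} {f : ℝ → ℝ}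
    (hf : ContDiff ℝ (⊤ : ℕ∞) f) {w : ℝ} (hk : iteratedDeriv k f w ≠ 0) :
    ∀ᶠ x in 𝓝[≠] w, f x ≠ 0 := by
  induction k generalizing f with
  | zero =>
    rw [iteratedDeriv_zero] at hk
    exact eventually_nhdsWithin_of_eventually_nhds (hf.continuous.continuousAt.eventually_ne hk)
  | succ k ih =>
    by_cases hfw : f w = 0
    · rw [iteratedDeriv_succ'] at hk
      have hderiv := ih (contDiff_infty_iff_deriv.mp hf).2 hk
      simpa only [hfw] using eventually_ne_of_eventually_deriv_ne_zero hf.continuous hderiv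
    · exact eventually_nhdsWithin_of_eventually_nhds (hf.continuous.continuousAt.eventually_ne hfw)

lemma NowhereFlat.eventually_deriv_ne_zero {h : ℝ → ℝ} (hh : ContDiff ℝ (⊤ : ℕ∞) h)
    (hnf : NowhereFlat h) (w : ℝ) : ∀ᶠ x in 𝓝[≠] w, deriv h x ≠ 0 := by
  obtain ⟨_, -, hr⟩ := hnf
  obtain ⟨r, hr0, -, hne⟩ := hr w
  obtain ⟨k, rfl⟩ := Nat.exists_eq_add_of_lt hr0
  rw [zero_add, iteratedDeriv_succ'] at hne
  exact eventually_ne_zero_of_iteratedDeriv_ne_zero (contDiff_infty_iff_deriv.mp hh).2 hne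

lemma NowhereFlat.comp_neg {h : ℝ → ℝ} (hnf : NowhereFlat h) : NowhereFlat (fun x => h (-x)) := by
  obtain ⟨r, hr, hx⟩ := hnf
  refine ⟨r, hr, fun x => ?_⟩
  obtain ⟨r', hr'0, hr'r, hne⟩ := hx (-x)
  refine ⟨r', hr'0, hr'r, ?_⟩
  rw [iteratedDeriv_comp_neg]
  exact smul_ne_zero (pow_ne_zero _ (by norm_num)) hne

lemma NowhereFlat.neg {h : ℝ → ℝ} (hnf : NowhereFlat h) : NowhereFlat (fun x => -h x) := by
  obtain ⟨r, hr, hx⟩ := hnf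
  refine ⟨r, hr, fun x => ?_⟩
  obtain ⟨r', hr'0, hr'r, hne⟩ := hx x
  exact ⟨r', hr'0, hr'r, by rwa [iteratedDeriv_fun_neg, neg_ne_zero]⟩

def IsSmoothSectionOn (h s : ℝ → ℝ) (a b : ℝ) : Prop :=
  ContinuousOn s (Icc a b) ∧ ContDiffOn ℝ (⊤ : ℕ∞) s (Ioo a b) ∧ ∀ x ∈ Icc a b, h (s x) = x

namespace IsSmoothSectionOn

variable {h s : ℝ → ℝ} {a b : ℝ}

lemma mono (hs : IsSmoothSectionOn h s a b) {a' b' : ℝ} (ha : a ≤ a') (hb : b' ≤ b) :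
    IsSmoothSectionOn h s a' b' :=
  ⟨hs.1.mono (Icc_subset_Icc ha hb), hs.2.1.mono (Ioo_subset_Ioo ha hb),
    fun x hx => hs.2.2 x (Icc_subset_Icc ha hb hx)⟩

lemma of_comp_neg (hs : IsSmoothSectionOn (fun x => h (-x)) s a b) :
    IsSmoothSectionOn h (fun x => -s x) a b :=
  ⟨hs.1.neg, hs.2.1.neg, hs.2.2⟩

lemma of_neg (hs : IsSmoothSectionOn (fun x => -h x) s a b) :
    IsSmoothSectionOn h (fun x => s (-x)) (-b) (-a) := by
  have hmaps : MapsTo Neg.neg (Icc (-b) (-a)) (Icc a b) := fun x hx => by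
    simpa [neg_le, le_neg, and_comm] using hx
  have hmaps' : MapsTo Neg.neg (Ioo (-b) (-a)) (Ioo a b) := fun x hx => by
    simpa [neg_lt, lt_neg, and_comm] using hx
  refine ⟨hs.1.comp continuous_neg.continuousOn hmaps,
    hs.2.1.comp contDiff_neg.contDiffOn hmaps', fun x hx => ?_⟩
  simpa using hs.2.2 (-x) (hmaps hx)

end IsSmoothSectionOn

lemma injOn_Icc_of_deriv_ne_zero {h : ℝ → ℝ} (hh : Continuous h) {p q : ℝ}
    (hd : ∀ t ∈ Ioo p q, deriv h t ≠ 0) : InjOn h (Icc p q) := by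
  suffices ∀ x ∈ Icc p q, ∀ y ∈ Icc p q, x < y → h x ≠ h y by
    intro x hx y hy hxy
    by_contra hne
    rcases lt_or_gt_of_ne hne with hlt | hgt
    exacts [this x hx y hy hlt hxy, this y hy x hx hgt hxy.symm]
  intro x hx y hy hlt hxy
  obtain ⟨ξ, hξ, hξ0⟩ := exists_deriv_eq_zero hlt hh.continuousOn hxy
  exact hd ξ ⟨hx.1.trans_lt hξ.1, hξ.2.trans_le hy.2⟩ hξ0

lemma continuousOn_of_rightInvOn_of_isCompact {X Y : Type*} [TopologicalSpace X]
    [TopologicalSpace Y] [T2Space Y] {f : X → Y} {g : Y → X} {C : Set X} {K : Set Y}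
    (hC : IsCompact C) (hf : ContinuousOn f C) (hinj : InjOn f C) (hg : MapsTo g K C)
    (hfg : RightInvOn g f K) : ContinuousOn g K := by
  have : CompactSpace C := isCompact_iff_compactSpace.mp hC
  have hemb := (hf.domRestrict.isClosedEmbedding hinj.injective).isEmbedding
  rw [continuousOn_iff_continuous_domRestrict]
  refine continuous_subtype_val.comp (f := hg.restrict g K C) (hemb.continuous_iff.mpr ?_)
  exact continuous_subtype_val.congr fun y => (hfg y.2).symm

lemma contDiffOn_of_rightInvOn {h s : ℝ → ℝ} {U : Set ℝ} (hh : ContDiff ℝ (⊤ : ℕ∞) h)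
    (hU : IsOpen U) (hs : ContinuousOn s U) (hinv : RightInvOn s h U)
    (hd : ∀ x ∈ U, deriv h (s x) ≠ 0) : ContDiffOn ℝ (⊤ : ℕ∞) s U := by
  have hderiv : ∀ x ∈ U, HasDerivAt s (deriv h (s x))⁻¹ x := fun x hx =>
    HasDerivAt.of_local_left_inverse (hs.continuousAt (hU.mem_nhds hx))
      ((hh.differentiable (by simp)) (s x)).hasDerivAt (hd x hx)
      (eventually_of_mem (hU.mem_nhds hx) hinv)
  have hh' : ContDiff ℝ (⊤ : ℕ∞) (deriv h) := (contDiff_infty_iff_deriv.mp hh).2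
  rw [contDiffOn_infty]
  intro n
  induction n with
  | zero => exact contDiffOn_zero.mpr hs
  | succ n ih =>
    rw [Nat.cast_add, Nat.cast_one, contDiffOn_succ_iff_deriv_of_isOpen hU]
    refine ⟨fun x hx => (hderiv x hx).differentiableAt.differentiableWithinAt,
      fun hω => by simp at hω, ?_⟩
    have hh'n : ContDiff ℝ n (deriv h) := hh'.of_le (WithTop.coe_le_coe.mpr le_top)
    exact (hh'n.comp_contDiffOn ih |>.inv hd).congr fun x hx => (hderiv x hx).deriv

lemma exists_isSmoothSectionOn_of_deriv_ne_zero {h : ℝ → ℝ} (hh : ContDiff ℝ (⊤ : ℕ∞) h)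
    {p q : ℝ} (hpq : p < q) (hd : ∀ t ∈ Ioo p q, deriv h t ≠ 0) :
    ∃ s, IsSmoothSectionOn h s (min (h p) (h q)) (max (h p) (h q)) := by
  have hsurj : SurjOn h (Icc p q) (uIcc (h p) (h q)) := by
    have := intermediate_value_uIcc (a := p) (b := q) hh.continuous.continuousOn
    rwa [uIcc_of_le hpq.le] at this
  set s := Function.invFunOn h (Icc p q)
  have hmaps : MapsTo s (uIcc (h p) (h q)) (Icc p q) := hsurj.mapsTo_invFunOn
  have hinv : RightInvOn s h (uIcc (h p) (h q)) := hsurj.rightInvOn_invFunOn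
  have hinj := injOn_Icc_of_deriv_ne_zero hh.continuous hd
  have hcont : ContinuousOn s (uIcc (h p) (h q)) :=
    continuousOn_of_rightInvOn_of_isCompact isCompact_Icc hh.continuous.continuousOn hinj hmaps hinv
  have hmaps' : MapsTo s (Ioo (min (h p) (h q)) (max (h p) (h q))) (Ioo p q) := by
    intro x hx
    have hxI : x ∈ uIcc (h p) (h q) := Ioo_subset_Icc_self hx
    obtain ⟨hp, hq⟩ := hmaps hxI
    have hx' : x ∈ uIoo (h p) (h q) := hx
    have hxp : h p ≠ x := fun e => by rw [← e] at hx'; exact left_notMem_uIoo hx'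
    have hxq : h q ≠ x := fun e => by rw [← e] at hx'; exact right_notMem_uIoo hx'
    refine ⟨hp.lt_of_ne fun e => hxp ?_, hq.lt_of_ne fun e => hxq ?_⟩
    · rw [e, hinv hxI]
    · rw [← e, hinv hxI]
  refine ⟨s, hcont, contDiffOn_of_rightInvOn hh isOpen_Ioo (hcont.mono Ioo_subset_Icc_self)
    (hinv.mono Ioo_subset_Icc_self) fun x hx => hd _ (hmaps' hx), fun x hx => hinv hx⟩

lemma exists_isSmoothSectionOn_above_of_lt {h : ℝ → ℝ} (hh : ContDiff ℝ (⊤ : ℕ∞) h)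
    (hnf : NowhereFlat h) {x₀ x₁ c : ℝ} (hx : x₀ < x₁) (h₀ : h x₀ ≤ c) (h₁ : c < h x₁) :
    ∃ d > c, ∃ s, IsSmoothSectionOn h s c d := by
  set S := {x ∈ Icc x₀ x₁ | h x ≤ c}
  have hS : IsClosed S := isClosed_Icc.inter (isClosed_le hh.continuous continuous_const)
  have hSbdd : BddAbove S := ⟨x₁, fun x hx => hx.1.2⟩
  set t := sSup S
  obtain ⟨⟨hx₀t, htx₁⟩, hht⟩ : t ∈ S := hS.csSup_mem ⟨x₀, ⟨le_rfl, hx.le⟩, h₀⟩ hSbdd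
  have habove : ∀ x ∈ Ioc t x₁, c < h x := fun x hx => by
    by_contra! hle
    exact hx.1.not_ge (le_csSup hSbdd ⟨⟨hx₀t.trans hx.1.le, hx.2⟩, hle⟩)
  obtain ⟨u, htu, hu⟩ := mem_nhdsGT_iff_exists_Ioo_subset.mp
    (nhdsGT_le_nhdsNE t (hnf.eventually_deriv_ne_zero hh t))
  have htx₁ : t < x₁ := htx₁.lt_of_ne fun e => (hht.trans_lt h₁).ne (by rw [e])
  set q := min u x₁
  have htq : t < q := lt_min htu htx₁
  have hcq : c < h q := habove q ⟨htq, min_le_right _ _⟩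
  obtain ⟨s, hs⟩ := exists_isSmoothSectionOn_of_deriv_ne_zero hh htq
    fun y hy => hu ⟨hy.1, hy.2.trans_le (min_le_left _ _)⟩
  exact ⟨h q, hcq, s, hs.mono ((min_le_left _ _).trans hht) (le_max_right _ _)⟩

namespace NowhereFlat

variable {h : ℝ → ℝ}

lemma exists_isSmoothSectionOn_above (hh : ContDiff ℝ (⊤ : ℕ∞) h) (hnf : NowhereFlat h)
    (hsurj : Function.Surjective h) (c : ℝ) : ∃ d > c, ∃ s, IsSmoothSectionOn h s c d := by
  obtain ⟨x₀, hx₀⟩ := hsurj c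
  obtain ⟨x₁, hx₁⟩ := hsurj (c + 1)
  have hne : x₀ ≠ x₁ := fun e => by linarith [congrArg h e]
  rcases hne.lt_or_gt with hlt | hgt
  · exact exists_isSmoothSectionOn_above_of_lt hh hnf hlt hx₀.le (by linarith)
  · obtain ⟨d, hcd, s, hs⟩ := exists_isSmoothSectionOn_above_of_lt (hh.comp contDiff_neg)
      hnf.comp_neg (c := c) (neg_lt_neg hgt) (by simp [hx₀]) (by simp [hx₁])
    exact ⟨d, hcd, _, hs.of_comp_neg⟩

lemma exists_isSmoothSectionOn_below (hh : ContDiff ℝ (⊤ : ℕ∞) h) (hnf : NowhereFlat h)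
    (hsurj : Function.Surjective h) (c : ℝ) : ∃ a < c, ∃ s, IsSmoothSectionOn h s a c := by
  obtain ⟨d, hcd, s, hs⟩ := exists_isSmoothSectionOn_above hh.neg hnf.neg
    (fun y => (hsurj (-y)).imp fun x hx => by simp [hx]) (-c)
  exact ⟨-d, by linarith, _, by simpa using hs.of_neg⟩

end NowhereFlat

lemma isClosed_and_discrete_of_finite_inter {X : Type*} [TopologicalSpace X] [T1Space X]
    {Y : Set X} (hY : ∀ x, ∃ t ∈ 𝓝 x, (t ∩ Y).Finite) :
    IsClosed Y ∧ IsDiscrete Y := by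
  have hcod : Yᶜ ∈ codiscreteWithin univ :=
    codiscreteWithin_iff_locallyFiniteComplementWithin.mpr fun x _ => by simpa using hY x
  exact isClosed_and_discrete_iff.mpr fun x => by simpa using mem_codiscreteWithin.mp hcod x trivial

lemma Int.eq_of_mem_Icc_of_mem_Ioo {m n : ℤ} {w : ℝ} (hm : w ∈ Icc (m : ℝ) (m + 1))
    (hn : w ∈ Ioo (n : ℝ) (n + 1)) : m = n := by
  have h₁ : m < n + 1 := by exact_mod_cast hm.1.trans_lt hn.2
  have h₂ : n < m + 1 := by exact_mod_cast hn.1.trans_le hm.2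
  omega

def IsCellPartitionOn (G : ℝ → ℝ → Prop) (Y I : Set ℝ) : Prop :=
  ∀ x ∈ I, ∃ u v, x ∈ Ico u v ∧ u ∈ Y ∧ v ∈ Y ∧ Disjoint (Ioo u v) Y ∧ G u v

section CellPartition

variable {G : ℝ → ℝ → Prop}

lemma IsCellPartitionOn.insert {F : Set ℝ} {a x x' : ℝ} (hF : IsCellPartitionOn G F (Ico a x))
    (hx : x ∈ F) (hFx : F ⊆ Iic x) (hxx' : x < x') (hG : G x x') :
    IsCellPartitionOn G (insert x' F) (Ico a x') := by
  rintro y ⟨hay, hyx'⟩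
  rcases lt_or_ge y x with hyx | hxy
  · obtain ⟨u, v, hy, hu, hv, hdisj, hGuv⟩ := hF y ⟨hay, hyx⟩
    refine ⟨u, v, hy, mem_insert_of_mem _ hu, mem_insert_of_mem _ hv,
      disjoint_insert_right.mpr ⟨fun hx' => ?_, hdisj⟩, hGuv⟩
    exact (hx'.2.trans_le (hFx hv)).not_gt hxx'
  · refine ⟨x, x', ⟨hxy, hyx'⟩, mem_insert_of_mem _ hx, mem_insert _ _,
      disjoint_insert_right.mpr ⟨fun hx' => hx'.2.false, ?_⟩, hG⟩
    exact disjoint_left.mpr fun z hz hzF => (hFx hzF).not_gt hz.1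

lemma exists_finite_isCellPartitionOn_Ico
    (hmono : ∀ ⦃a b a' b'⦄, G a b → a ≤ a' → b' ≤ b → G a' b')
    (hright : ∀ c, ∃ d > c, G c d) (hleft : ∀ c, ∃ a < c, G a c) {a b : ℝ} (hab : a ≤ b) :
    ∃ F : Set ℝ, F.Finite ∧ b ∈ F ∧ F ⊆ Icc a b ∧ IsCellPartitionOn G F (Ico a b) := by
  set P : ℝ → Prop := fun x =>
    ∃ F : Set ℝ, F.Finite ∧ x ∈ F ∧ F ⊆ Icc a x ∧ IsCellPartitionOn G F (Ico a x)
  have hext : ∀ x x', P x → x < x' → G x x' → P x' := by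
    rintro x x' ⟨F, hFfin, hxF, hFx, hF⟩ hxx' hG
    refine ⟨insert x' F, hFfin.insert x', mem_insert _ _,
      insert_subset ⟨(hFx hxF).1.trans hxx'.le, le_rfl⟩ (hFx.trans (Icc_subset_Icc_right hxx'.le)),
      hF.insert hxF (hFx.trans Icc_subset_Iic_self) hxx' hG⟩
  set S := {x ∈ Icc a b | P x}
  have haS : a ∈ S :=
    ⟨⟨le_rfl, hab⟩, {a}, finite_singleton a, rfl, by simp, by simp [IsCellPartitionOn]⟩
  have hSbdd : BddAbove S := ⟨b, fun x hx => hx.1.2⟩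
  set t := sSup S
  have hat : a ≤ t := le_csSup hSbdd haS
  have htb : t ≤ b := csSup_le ⟨a, haS⟩ fun x hx => hx.1.2
  have ht : P t := by
    obtain ⟨l, hlt, hG⟩ := hleft t
    obtain ⟨x, hxS, hlx⟩ := exists_lt_of_lt_csSup ⟨a, haS⟩ hlt
    rcases (le_csSup hSbdd hxS).eq_or_lt with hxt | hxt
    · rw [show t = x from hxt.symm]
      exact hxS.2
    · exact hext x t hxS.2 hxt (hmono hG hlx.le le_rfl)
  rcases htb.eq_or_lt with htb | htb
  · exact htb ▸ ht
  obtain ⟨r, htr, hG⟩ := hright t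
  have hrS : min r b ∈ S := ⟨⟨hat.trans (le_min htr.le htb.le), min_le_right _ _⟩,
    hext t _ ht (lt_min htr htb) (hmono hG le_rfl (min_le_left _ _))⟩
  exact absurd (le_csSup hSbdd hrS) (not_le.mpr (lt_min htr htb))

lemma exists_isClosed_discrete_isCellPartitionOn_univ
    (hmono : ∀ ⦃a b a' b'⦄, G a b → a ≤ a' → b' ≤ b → G a' b')
    (hright : ∀ c, ∃ d > c, G c d) (hleft : ∀ c, ∃ a < c, G a c) :
    ∃ Y : Set ℝ, IsClosed Y ∧ DiscreteTopology Y ∧ IsCellPartitionOn G Y univ := by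
  choose F hFfin _ hFsub hF using fun n : ℤ =>
    exists_finite_isCellPartitionOn_Ico hmono hright hleft (a := n) (b := n + 1) (by linarith)
  have hcells : IsCellPartitionOn G (⋃ n, F n) univ := by
    rintro x -
    obtain ⟨u, v, hx, hu, hv, hdisj, hG⟩ := hF ⌊x⌋ x ⟨Int.floor_le x, Int.lt_floor_add_one x⟩
    refine ⟨u, v, hx, mem_iUnion_of_mem _ hu, mem_iUnion_of_mem _ hv,
      disjoint_iUnion_right.mpr fun m => ?_, hG⟩
    rcases eq_or_ne m ⌊x⌋ with rfl | hm
    · exact hdisj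
    refine disjoint_left.mpr fun w hw hwm => hm (Int.eq_of_mem_Icc_of_mem_Ioo (hFsub m hwm) ?_)
    exact ⟨(hFsub _ hu).1.trans_lt hw.1, hw.2.trans_le (hFsub _ hv).2⟩
  have hfin : ∀ x, ∃ t ∈ 𝓝 x, (t ∩ ⋃ n, F n).Finite := by
    intro x
    refine ⟨Ioo (⌊x⌋ - 1 : ℝ) (⌊x⌋ + 1), Ioo_mem_nhds (by linarith [Int.floor_le x])
      (Int.lt_floor_add_one x), ((hFfin (⌊x⌋ - 1)).union (hFfin ⌊x⌋)).subset ?_⟩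
    rintro w ⟨⟨hw₁, hw₂⟩, hw⟩
    obtain ⟨m, hm⟩ := mem_iUnion.mp hw
    obtain ⟨hmw, hwm⟩ := hFsub m hm
    have h₁ : m < ⌊x⌋ + 1 := by exact_mod_cast hmw.trans_lt hw₂
    have h₂ : ⌊x⌋ - 2 < m := by
      have : (⌊x⌋ : ℝ) - 2 < m := by linarith
      exact_mod_cast this
    obtain rfl | rfl : m = ⌊x⌋ - 1 ∨ m = ⌊x⌋ := by omega
    exacts [Or.inl hm, Or.inr hm]
  obtain ⟨hclosed, hdiscrete⟩ := isClosed_and_discrete_of_finite_inter hfin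
  exact ⟨_, hclosed, hdiscrete.to_subtype, hcells⟩

end CellPartition

lemma connectedComponentIn_compl_eq_Ioo {α : Type*} [ConditionallyCompleteLinearOrder α]
    [TopologicalSpace α] [OrderTopology α] [DenselyOrdered α] {Y : Set α} {u v x : α}
    (hu : u ∈ Y) (hv : v ∈ Y) (hdisj : Disjoint (Ioo u v) Y) (hx : x ∈ Ioo u v) :
    connectedComponentIn Yᶜ x = Ioo u v := by
  have hsub : Ioo u v ⊆ Yᶜ := hdisj.subset_compl_right
  refine Subset.antisymm (fun z hz => ?_) (isPreconnected_Ioo.subset_connectedComponentIn hx hsub)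
  have hC := (isPreconnected_connectedComponentIn (F := Yᶜ) (x := x)).ordConnected
  have hCY : connectedComponentIn Yᶜ x ⊆ Yᶜ := connectedComponentIn_subset _ _
  have hxC := mem_connectedComponentIn (hsub hx)
  constructor
  · by_contra! hzu
    exact hCY (hC.out hz hxC ⟨hzu, hx.1.le⟩) hu
  · by_contra! hvz
    exact hCY (hC.out hxC hz ⟨hx.2.le, hvz⟩) hv

lemma le_and_le_of_mem_Ico_of_disjoint {α : Type*} [LinearOrder α] {Y : Set α} {u v u' v' x : α}
    (hx : x ∈ Ico u v) (hx' : x ∈ Ico u' v') (hu' : u' ∈ Y) (hv' : v' ∈ Y)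
    (hdisj : Disjoint (Ioo u v) Y) : u' ≤ u ∧ v ≤ v' := by
  constructor <;> by_contra! hlt
  · exact disjoint_left.mp hdisj ⟨hlt, hx'.1.trans_lt hx.2⟩ hu'
  · exact disjoint_left.mp hdisj ⟨hx.1.trans_lt hx'.2, hlt⟩ hv'

lemma exists_piecewiseSmooth_rightInverse {h : ℝ → ℝ} {Y : Set ℝ} (hY : IsClosed Y)
    (hYd : DiscreteTopology Y)
    (hcells : IsCellPartitionOn (fun a b => ∃ s, IsSmoothSectionOn h s a b) Y univ) :
    ∃ hs : ℝ → ℝ, PiecewiseSmooth hs ∧ ∀ x, h (hs x) = x := by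
  choose! S hS using fun a b (hab : ∃ s, IsSmoothSectionOn h s a b) => hab
  choose u v hx hu hv hdisj hG using fun x => hcells x trivial
  have hcell_eq : ∀ x, ∀ t ∈ Ico (u x) (v x), u t = u x ∧ v t = v x := fun x t ht => by
    have h₁ := le_and_le_of_mem_Ico_of_disjoint (hx t) ht (hu x) (hv x) (hdisj t)
    have h₂ := le_and_le_of_mem_Ico_of_disjoint ht (hx t) (hu t) (hv t) (hdisj x)
    exact ⟨le_antisymm h₂.1 h₁.1, le_antisymm h₁.2 h₂.2⟩
  refine ⟨fun x => S (u x) (v x) x, ⟨Y, hY, hYd, fun x hxY => ?_⟩,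
    fun x => (hS _ _ (hG x)).2.2 x (Ico_subset_Icc_self (hx x))⟩
  have hxI : x ∈ Ioo (u x) (v x) := ⟨(hx x).1.lt_of_ne fun e => hxY (e ▸ hu x), (hx x).2⟩
  have heq : EqOn (S (u x) (v x)) (fun t => S (u t) (v t) t) (Ioo (u x) (v x)) := fun t ht => by
    obtain ⟨h₁, h₂⟩ := hcell_eq x t (Ioo_subset_Ico_self ht)
    simp only [h₁, h₂]
  rw [connectedComponentIn_compl_eq_Ioo (hu x) (hv x) (hdisj x) hxI]
  obtain ⟨hcont, hsmooth, -⟩ := hS _ _ (hG x)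
  refine ⟨hsmooth.congr fun t ht => (heq ht).symm, S (u x) (v x), ?_, heq⟩
  rwa [closure_Ioo (hxI.1.trans hxI.2).ne]

/-- Lemma 3.5. A smooth, nowhere flat, surjective `h : ℝ → ℝ` admits
a piecewise smooth right inverse. -/
theorem stmt_11 (h : ℝ → ℝ) (hsm : ContDiff ℝ (⊤ : ℕ∞) h) (hnf : NowhereFlat h)
    (hsurj : Function.Surjective h) :
    ∃ hs : ℝ → ℝ, PiecewiseSmooth hs ∧ ∀ x : ℝ, h (hs x) = x := by
  obtain ⟨Y, hY, hYd, hcells⟩ := exists_isClosed_discrete_isCellPartitionOn_univ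
    (G := fun a b => ∃ s, IsSmoothSectionOn h s a b)
    (fun _ _ _ _ ⟨s, hs⟩ ha hb => ⟨s, hs.mono ha hb⟩)
    (hnf.exists_isSmoothSectionOn_above hsm hsurj) (hnf.exists_isSmoothSectionOn_below hsm hsurj)
  exact exists_piecewiseSmooth_rightInverse hY hYd hcells
end

section
/- Let θ_M > 0 and let ρ : [0, θ_M] → ℝ be smooth with ρ(τ) > 0 for all τ, ρ(0) = 1, ρ'(0) = 0, and ∫₀^{θ_M} ρ(τ) dτ = 2π. Then there exists a unique strictly increasing continuously differentiable bijection θ : [0,2π] → [0,θ_M] such that the curve v(t) = (v₁(t), v₂(t)) = √(ρ(θ(t)))·(cos θ(t), sin θ(t)) satisfies v₁(t)·v₂'(t) − v₂(t)·v₁'(t) = 1 for all t ∈ [0,2π]. Moreover v(0) = (1,0), v'(0) = (0,1), and there exists a continuous function q : [0,2π] → ℝ such that v₁''(t) = q(t)·v₁(t) and v₂''(t) = q(t)·v₂(t) for all t ∈ [0,2π]. -/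
/-!
The Wronskian of `v = √(ρ ∘ θ) · (cos θ, sin θ)` equals `ρ(θ) θ'`, so the Kepler condition says
that `θ` inverts the area function `x ↦ ∫₀ˣ ρ`, which is strictly increasing: this gives
existence and uniqueness. The equation `θ' = 1 / ρ(θ)` makes `θ` as smooth as `ρ` plus one
derivative, and since the Wronskian is constant, `v₁ v₂'' - v₂ v₁''` vanishes, i.e. `v''` is
parallel to the nonvanishing `v`; hence `v'' = q v` with `q = ⟨v, v''⟩ / |v|²`.
-/

open Real Set

/-- The first fundamental solution produced by the Kepler transform:
`v₁(t) = √(ρ(θ(t)))·cos θ(t)`. -/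
noncomputable def kepV₁ (ρ θ : ℝ → ℝ) (t : ℝ) : ℝ := Real.sqrt (ρ (θ t)) * Real.cos (θ t)

/-- The second fundamental solution produced by the Kepler transform:
`v₂(t) = √(ρ(θ(t)))·sin θ(t)`. -/
noncomputable def kepV₂ (ρ θ : ℝ → ℝ) (t : ℝ) : ℝ := Real.sqrt (ρ (θ t)) * Real.sin (θ t)

/-- `θ` is a Kepler reparametrization for the orbit `ρ` on `[0,θM]`:
a strictly increasing `C¹` bijection `[0,2π] → [0,θM]` for which the curve
`v = √(ρ∘θ)·(cos θ, sin θ)` has Wronskian `v₁·v₂' − v₂·v₁' ≡ 1`. -/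
noncomputable def KeplerProp (θM : ℝ) (ρ θ : ℝ → ℝ) : Prop :=
  StrictMonoOn θ (Icc 0 (2 * π)) ∧
  ContDiffOn ℝ 1 θ (Icc 0 (2 * π)) ∧
  BijOn θ (Icc 0 (2 * π)) (Icc 0 θM) ∧
  ∀ t ∈ Icc (0:ℝ) (2 * π),
    kepV₁ ρ θ t * derivWithin (kepV₂ ρ θ) (Icc 0 (2 * π)) t -
      kepV₂ ρ θ t * derivWithin (kepV₁ ρ θ) (Icc 0 (2 * π)) t = 1

section PolarCurve

variable {ρ θ : ℝ → ℝ} {s S : Set ℝ} {t ρ' θ' : ℝ}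

theorem hasDerivWithinAt_kepV₁ (hρ : HasDerivWithinAt ρ ρ' S (θ t))
    (hθ : HasDerivWithinAt θ θ' s t) (hmaps : MapsTo θ s S) (hpos : 0 < ρ (θ t)) :
    HasDerivWithinAt (kepV₁ ρ θ)
      (ρ' * θ' / (2 * √(ρ (θ t))) * cos (θ t) - √(ρ (θ t)) * sin (θ t) * θ') s t :=
  have hr : HasDerivWithinAt (fun x => ρ (θ x)) (ρ' * θ') s t := hρ.comp t hθ hmaps
  ((hr.sqrt hpos.ne').mul hθ.cos).congr_deriv (by ring)

theorem hasDerivWithinAt_kepV₂ (hρ : HasDerivWithinAt ρ ρ' S (θ t))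
    (hθ : HasDerivWithinAt θ θ' s t) (hmaps : MapsTo θ s S) (hpos : 0 < ρ (θ t)) :
    HasDerivWithinAt (kepV₂ ρ θ)
      (ρ' * θ' / (2 * √(ρ (θ t))) * sin (θ t) + √(ρ (θ t)) * cos (θ t) * θ') s t :=
  have hr : HasDerivWithinAt (fun x => ρ (θ x)) (ρ' * θ') s t := hρ.comp t hθ hmaps
  ((hr.sqrt hpos.ne').mul hθ.sin).congr_deriv (by ring)

theorem kepV_wronskian_eq (hs : UniqueDiffWithinAt ℝ s t) (hρ : HasDerivWithinAt ρ ρ' S (θ t))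
    (hθ : HasDerivWithinAt θ θ' s t) (hmaps : MapsTo θ s S) (hpos : 0 < ρ (θ t)) :
    kepV₁ ρ θ t * derivWithin (kepV₂ ρ θ) s t - kepV₂ ρ θ t * derivWithin (kepV₁ ρ θ) s t =
      ρ (θ t) * θ' := by
  rw [(hasDerivWithinAt_kepV₁ hρ hθ hmaps hpos).derivWithin hs,
    (hasDerivWithinAt_kepV₂ hρ hθ hmaps hpos).derivWithin hs, kepV₁, kepV₂]
  have hsq : √(ρ (θ t)) ^ 2 = ρ (θ t) := sq_sqrt hpos.le
  linear_combination θ' * (sin_sq_add_cos_sq (θ t) * √(ρ (θ t)) ^ 2 + hsq)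

theorem kepV₁_sq_add_kepV₂_sq (hpos : 0 ≤ ρ (θ t)) :
    kepV₁ ρ θ t ^ 2 + kepV₂ ρ θ t ^ 2 = ρ (θ t) := by
  rw [kepV₁, kepV₂]
  linear_combination
    (cos (θ t) ^ 2 + sin (θ t) ^ 2) * sq_sqrt hpos + ρ (θ t) * cos_sq_add_sin_sq (θ t)

end PolarCurve

section Wronskian

variable {v₁ v₂ : ℝ → ℝ} {s : Set ℝ} {c : ℝ}

theorem mul_derivWithin_derivWithin_eq_of_wronskian_eq (hs : UniqueDiffOn ℝ s)
    (h₁ : DifferentiableOn ℝ v₁ s) (h₂ : DifferentiableOn ℝ v₂ s)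
    (h₁' : DifferentiableOn ℝ (derivWithin v₁ s) s) (h₂' : DifferentiableOn ℝ (derivWithin v₂ s) s)
    (hW : ∀ t ∈ s, v₁ t * derivWithin v₂ s t - v₂ t * derivWithin v₁ s t = c) {t : ℝ} (ht : t ∈ s) :
    v₁ t * derivWithin (derivWithin v₂ s) s t = v₂ t * derivWithin (derivWithin v₁ s) s t := by
  have hW' := ((h₁ t ht).hasDerivWithinAt.mul (h₂' t ht).hasDerivWithinAt).sub
    ((h₂ t ht).hasDerivWithinAt.mul (h₁' t ht).hasDerivWithinAt)
  have hW₀ := (hasDerivWithinAt_const t s c).congr hW (hW t ht)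
  linarith [(hs t ht).eq_deriv s hW' hW₀]

theorem exists_continuousOn_potential_of_wronskian_eq (hs : UniqueDiffOn ℝ s)
    (h₁ : ContDiffOn ℝ 2 v₁ s) (h₂ : ContDiffOn ℝ 2 v₂ s) (hv : ∀ t ∈ s, v₁ t ^ 2 + v₂ t ^ 2 ≠ 0)
    (hW : ∀ t ∈ s, v₁ t * derivWithin v₂ s t - v₂ t * derivWithin v₁ s t = c) :
    ∃ q : ℝ → ℝ, ContinuousOn q s ∧ ∀ t ∈ s,
      derivWithin (derivWithin v₁ s) s t = q t * v₁ t ∧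
      derivWithin (derivWithin v₂ s) s t = q t * v₂ t := by
  have h₁' : ContDiffOn ℝ 1 (derivWithin v₁ s) s := h₁.derivWithin hs (by norm_num)
  have h₂' : ContDiffOn ℝ 1 (derivWithin v₂ s) s := h₂.derivWithin hs (by norm_num)
  refine ⟨fun t => (v₁ t * derivWithin (derivWithin v₁ s) s t +
    v₂ t * derivWithin (derivWithin v₂ s) s t) / (v₁ t ^ 2 + v₂ t ^ 2), ?_, fun t ht => ?_⟩
  · exact ((h₁.continuousOn.mul (h₁'.continuousOn_derivWithin hs le_rfl)).add
      (h₂.continuousOn.mul (h₂'.continuousOn_derivWithin hs le_rfl))).div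
      ((h₁.continuousOn.pow 2).add (h₂.continuousOn.pow 2)) hv
  have hpar := mul_derivWithin_derivWithin_eq_of_wronskian_eq hs
    (h₁.differentiableOn (by norm_num)) (h₂.differentiableOn (by norm_num))
    (h₁'.differentiableOn one_ne_zero) (h₂'.differentiableOn one_ne_zero) hW ht
  constructor <;> field_simp [hv t ht]
  · linear_combination (-v₂ t) * hpar
  · linear_combination v₁ t * hpar

end Wronskian

section Smoothness

variable {ρ θ : ℝ → ℝ} {s S : Set ℝ}

theorem contDiffOn_succ_of_hasDerivWithinAt_inv_comp (hs : UniqueDiffOn ℝ s)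
    (hmaps : MapsTo θ s S) (hne : ∀ t ∈ s, ρ (θ t) ≠ 0)
    (hθ : ∀ t ∈ s, HasDerivWithinAt θ (ρ (θ t))⁻¹ s t) :
    ∀ n : ℕ, ContDiffOn ℝ n ρ S → ContDiffOn ℝ (n + 1 : ℕ) θ s := by
  have hdiff : DifferentiableOn ℝ θ s := fun t ht => (hθ t ht).differentiableWithinAt
  have hderiv : EqOn (derivWithin θ s) (fun t => (ρ (θ t))⁻¹) s := fun t ht =>
    (hθ t ht).derivWithin (hs t ht)
  intro n hρ
  induction n with
  | zero =>
    refine (contDiffOn_one_iff_derivWithin hs).2 ⟨hdiff, ?_⟩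
    exact ((hρ.continuousOn.comp hdiff.continuousOn hmaps).inv₀ hne).congr hderiv
  | succ n ih =>
    have hθn := ih (hρ.of_le (by norm_cast; omega))
    rw [Nat.cast_succ, contDiffOn_succ_iff_derivWithin hs]
    refine ⟨hdiff, fun h => by norm_cast at h, ?_⟩
    exact ((hρ.comp hθn hmaps).inv hne).congr hderiv

theorem ContDiffOn.kepV₁ {n : WithTop ℕ∞} (hρ : ContDiffOn ℝ n ρ S) (hθ : ContDiffOn ℝ n θ s)
    (hmaps : MapsTo θ s S) (hne : ∀ t ∈ s, ρ (θ t) ≠ 0) : ContDiffOn ℝ n (kepV₁ ρ θ) s :=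
  ((hρ.comp hθ hmaps).sqrt hne).mul (contDiff_cos.comp_contDiffOn hθ)

theorem ContDiffOn.kepV₂ {n : WithTop ℕ∞} (hρ : ContDiffOn ℝ n ρ S) (hθ : ContDiffOn ℝ n θ s)
    (hmaps : MapsTo θ s S) (hne : ∀ t ∈ s, ρ (θ t) ≠ 0) : ContDiffOn ℝ n (kepV₂ ρ θ) s :=
  ((hρ.comp hθ hmaps).sqrt hne).mul (contDiff_sin.comp_contDiffOn hθ)

end Smoothness

section Primitive

variable {g : ℝ → ℝ}

theorem strictMono_integral_of_pos (hg : Continuous g) (hpos : ∀ x, 0 < g x) :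
    StrictMono fun x => ∫ τ in (0 : ℝ)..x, g τ :=
  strictMono_of_deriv_pos fun x => by
    rw [(hg.integral_hasStrictDerivAt 0 x).hasDerivAt.deriv]
    exact hpos x

theorem surjective_integral_of_le {m : ℝ} (hg : Continuous g) (hm : 0 < m) (hgm : ∀ x, m ≤ g x) :
    Function.Surjective fun x => ∫ τ in (0 : ℝ)..x, g τ := by
  have hderiv (x : ℝ) :
      HasDerivAt (fun x => (∫ τ in (0 : ℝ)..x, g τ) - m * x) (g x - m * 1) x :=
    (hg.integral_hasStrictDerivAt 0 x).hasDerivAt.sub ((hasDerivAt_id' x).const_mul m)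
  have hmono : Monotone fun x => (∫ τ in (0 : ℝ)..x, g τ) - m * x :=
    monotone_of_deriv_nonneg (fun x => (hderiv x).differentiableAt) fun x => by
      rw [(hderiv x).deriv]
      linarith [hgm x]
  refine (intervalIntegral.continuous_primitive hg.intervalIntegrable 0).surjective ?_ ?_
  · refine Filter.tendsto_atTop_mono' _ ?_ (Filter.tendsto_id.const_mul_atTop hm)
    filter_upwards [Filter.eventually_ge_atTop 0] with x hx
    simpa using hmono hx
  · refine Filter.tendsto_atBot_mono' _ ?_ (Filter.tendsto_id.const_mul_atBot hm)
    filter_upwards [Filter.eventually_le_atBot 0] with x hx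
    simpa using hmono hx

theorem exists_orderIso_integral {m : ℝ} (hg : Continuous g) (hm : 0 < m) (hgm : ∀ x, m ≤ g x) :
    ∃ e : ℝ ≃o ℝ, (∀ x, e x = ∫ τ in (0 : ℝ)..x, g τ) ∧
      ∀ t, HasDerivAt e.symm (g (e.symm t))⁻¹ t := by
  set e := StrictMono.orderIsoOfSurjective _ (strictMono_integral_of_pos hg
    fun x => hm.trans_le (hgm x)) (surjective_integral_of_le hg hm hgm)
  refine ⟨e, fun x => rfl, fun t => ?_⟩
  exact HasDerivAt.of_local_left_inverse e.symm.continuous.continuousAt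
    (hg.integral_hasStrictDerivAt 0 _).hasDerivAt (hm.trans_le (hgm _)).ne'
    (Filter.Eventually.of_forall e.apply_symm_apply)

end Primitive

theorem exists_continuous_extension_of_pos {a b : ℝ} {ρ : ℝ → ℝ} (hab : a ≤ b)
    (hρ : ContinuousOn ρ (Icc a b)) (hpos : ∀ x ∈ Icc a b, 0 < ρ x) :
    ∃ g : ℝ → ℝ, Continuous g ∧ EqOn g ρ (Icc a b) ∧ ∃ m, 0 < m ∧ ∀ x, m ≤ g x := by
  obtain ⟨x₀, hx₀, hmin⟩ := isCompact_Icc.exists_isMinOn (nonempty_Icc.2 hab) hρ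
  refine ⟨IccExtend hab ((Icc a b).domRestrict ρ), hρ.domRestrict.Icc_extend',
    fun x hx => by simp [IccExtend_of_mem _ _ hx, Set.domRestrict], ρ x₀, hpos x₀ hx₀, fun x => ?_⟩
  exact hmin (projIcc a b hab x).2

namespace KeplerProp

variable {θM : ℝ} {ρ φ : ℝ → ℝ}

theorem apply_zero (hθM : 0 ≤ θM) (hφ : KeplerProp θM ρ φ) : φ 0 = 0 := by
  obtain ⟨hmono, -, hbij, -⟩ := hφ
  have h0 : (0 : ℝ) ∈ Icc 0 (2 * π) := ⟨le_rfl, two_pi_pos.le⟩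
  obtain ⟨s, hs, hφs⟩ := hbij.surjOn (⟨le_rfl, hθM⟩ : (0 : ℝ) ∈ Icc 0 θM)
  exact le_antisymm (hφs ▸ hmono.monotoneOn h0 hs hs.1) (hbij.mapsTo h0).1

theorem hasDerivWithinAt (hρ : DifferentiableOn ℝ ρ (Icc 0 θM))
    (hpos : ∀ x ∈ Icc 0 θM, 0 < ρ x) (hφ : KeplerProp θM ρ φ) {t : ℝ} (ht : t ∈ Icc 0 (2 * π)) :
    HasDerivWithinAt φ (ρ (φ t))⁻¹ (Icc 0 (2 * π)) t := by
  obtain ⟨-, hC1, hbij, hW⟩ := hφ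
  have hφt := ((hC1.differentiableOn one_ne_zero) t ht).hasDerivWithinAt
  have hρφt := (hρ _ (hbij.mapsTo ht)).hasDerivWithinAt
  have hWt := kepV_wronskian_eq (uniqueDiffOn_Icc two_pi_pos t ht) hρφt hφt hbij.mapsTo
    (hpos _ (hbij.mapsTo ht))
  rw [hW t ht, eq_comm] at hWt
  rwa [eq_inv_of_mul_eq_one_right hWt] at hφt

theorem integral_apply {g : ℝ → ℝ} (hθM : 0 ≤ θM) (hρ : DifferentiableOn ℝ ρ (Icc 0 θM))
    (hpos : ∀ x ∈ Icc 0 θM, 0 < ρ x) (hg : Continuous g) (hgρ : EqOn g ρ (Icc 0 θM))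
    (hφ : KeplerProp θM ρ φ) {t : ℝ} (ht : t ∈ Icc 0 (2 * π)) :
    ∫ τ in (0 : ℝ)..φ t, g τ = t := by
  have hmaps := hφ.2.2.1.mapsTo
  have hderiv : ∀ x ∈ Ico 0 (2 * π),
      HasDerivWithinAt (fun s => ∫ τ in (0 : ℝ)..φ s, g τ) 1 (Ici x) x := by
    intro x hx
    have hx' := Ico_subset_Icc_self hx
    have h := (hg.integral_hasStrictDerivAt 0 (φ x)).hasDerivAt.comp_hasDerivWithinAt x
      (hφ.hasDerivWithinAt hρ hpos hx')
    rw [hgρ (hmaps hx'), mul_inv_cancel₀ (hpos _ (hmaps hx')).ne'] at h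
    exact h.mono_of_mem_nhdsWithin (Icc_mem_nhdsGE_of_mem hx)
  refine eq_of_has_deriv_right_eq hderiv (fun x _ => hasDerivWithinAt_id x (Ici x))
    ?_ continuousOn_id (by simp [hφ.apply_zero hθM]) t ht
  exact (intervalIntegral.continuous_primitive hg.intervalIntegrable 0).comp_continuousOn
    hφ.2.1.continuousOn

theorem eqOn {θ : ℝ → ℝ} (hθM : 0 ≤ θM) (hρ : DifferentiableOn ℝ ρ (Icc 0 θM))
    (hpos : ∀ x ∈ Icc 0 θM, 0 < ρ x) (hφ : KeplerProp θM ρ φ) (hθ : KeplerProp θM ρ θ) :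
    EqOn φ θ (Icc 0 (2 * π)) := by
  obtain ⟨g, hg, hgρ, m, hm, hgm⟩ :=
    exists_continuous_extension_of_pos hθM hρ.continuousOn hpos
  intro t ht
  refine (strictMono_integral_of_pos hg fun x => hm.trans_le (hgm x)).injective ?_
  simp only [hφ.integral_apply hθM hρ hpos hg hgρ ht, hθ.integral_apply hθM hρ hpos hg hgρ ht]

end KeplerProp

theorem exists_keplerProp {θM : ℝ} {ρ : ℝ → ℝ} (hθM : 0 < θM)
    (hρ : DifferentiableOn ℝ ρ (Icc 0 θM)) (hpos : ∀ x ∈ Icc 0 θM, 0 < ρ x)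
    (hint : ∫ τ in (0 : ℝ)..θM, ρ τ = 2 * π) :
    ∃ θ : ℝ → ℝ, KeplerProp θM ρ θ := by
  obtain ⟨g, hg, hgρ, m, hm, hgm⟩ :=
    exists_continuous_extension_of_pos hθM.le hρ.continuousOn hpos
  obtain ⟨e, he, hderiv⟩ := exists_orderIso_integral hg hm hgm
  have he0 : e 0 = 0 := by simp [he]
  have heθM : e θM = 2 * π := by
    rw [he, ← hint]
    exact intervalIntegral.integral_congr fun x hx => hgρ (by rwa [uIcc_of_le hθM.le] at hx)
  have himage : e.symm '' Icc 0 (2 * π) = Icc 0 θM := by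
    rw [e.symm.image_Icc, e.symm_apply_eq.2 he0.symm, e.symm_apply_eq.2 heθM.symm]
  have hmaps : MapsTo e.symm (Icc 0 (2 * π)) (Icc 0 θM) := himage ▸ mapsTo_image _ _
  have hne (t : ℝ) (ht : t ∈ Icc 0 (2 * π)) : ρ (e.symm t) ≠ 0 := (hpos _ (hmaps ht)).ne'
  have hderiv' (t : ℝ) (ht : t ∈ Icc 0 (2 * π)) :
      HasDerivWithinAt e.symm (ρ (e.symm t))⁻¹ (Icc 0 (2 * π)) t :=
    hgρ (hmaps ht) ▸ (hderiv t).hasDerivWithinAt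
  refine ⟨e.symm, e.symm.strictMono.strictMonoOn _, ?_,
    himage ▸ e.symm.injective.injOn.bijOn_image, fun t ht => ?_⟩
  · exact_mod_cast contDiffOn_succ_of_hasDerivWithinAt_inv_comp (uniqueDiffOn_Icc two_pi_pos)
      hmaps hne hderiv' 0 (contDiffOn_zero.2 hρ.continuousOn)
  · rw [kepV_wronskian_eq (uniqueDiffOn_Icc two_pi_pos t ht) (hρ _ (hmaps ht)).hasDerivWithinAt
      (hderiv' t ht) hmaps (hpos _ (hmaps ht)), mul_inv_cancel₀ (hne t ht)]

/-- the Kepler transform. Given a smooth positive orbit `ρ` on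
`[0,θM]` with `ρ(0) = 1`, `ρ'(0) = 0` and `∫₀^{θM} ρ = 2π`, there is a unique Kepler
reparametrization `θ`; the resulting curve satisfies `v(0) = (1,0)`, `v'(0) = (0,1)` and
is the pair of fundamental solutions of `v'' = q·v` for a continuous potential `q`. -/
theorem stmt_18 (θM : ℝ) (hθM : 0 < θM) (ρ : ℝ → ℝ)
    (hρsm : ContDiffOn ℝ (⊤ : ℕ∞) ρ (Icc 0 θM))
    (hρpos : ∀ τ ∈ Icc (0:ℝ) θM, 0 < ρ τ)
    (hρ0 : ρ 0 = 1) (hρ'0 : derivWithin ρ (Icc 0 θM) 0 = 0)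
    (hρint : (∫ τ in (0:ℝ)..θM, ρ τ) = 2 * π) :
    ∃ θ : ℝ → ℝ, KeplerProp θM ρ θ ∧
      (∀ θ' : ℝ → ℝ, KeplerProp θM ρ θ' → EqOn θ' θ (Icc 0 (2 * π))) ∧
      kepV₁ ρ θ 0 = 1 ∧ kepV₂ ρ θ 0 = 0 ∧
      derivWithin (kepV₁ ρ θ) (Icc 0 (2 * π)) 0 = 0 ∧
      derivWithin (kepV₂ ρ θ) (Icc 0 (2 * π)) 0 = 1 ∧
      ∃ q : ℝ → ℝ, ContinuousOn q (Icc 0 (2 * π)) ∧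
        ∀ t ∈ Icc (0:ℝ) (2 * π),
          derivWithin (derivWithin (kepV₁ ρ θ) (Icc 0 (2 * π))) (Icc 0 (2 * π)) t =
            q t * kepV₁ ρ θ t ∧
          derivWithin (derivWithin (kepV₂ ρ θ) (Icc 0 (2 * π))) (Icc 0 (2 * π)) t =
            q t * kepV₂ ρ θ t := by
  have hs : UniqueDiffOn ℝ (Icc 0 (2 * π)) := uniqueDiffOn_Icc two_pi_pos
  have h0 : (0 : ℝ) ∈ Icc 0 (2 * π) := ⟨le_rfl, two_pi_pos.le⟩
  have hρ : DifferentiableOn ℝ ρ (Icc 0 θM) := hρsm.differentiableOn (by simp)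
  have hρ2 : ContDiffOn ℝ 2 ρ (Icc 0 θM) := hρsm.of_le (ENat.LEInfty.out)
  obtain ⟨θ, hθ⟩ := exists_keplerProp hθM hρ hρpos hρint
  have hmaps : MapsTo θ (Icc 0 (2 * π)) (Icc 0 θM) := hθ.2.2.1.mapsTo
  have hpos (t : ℝ) (ht : t ∈ Icc 0 (2 * π)) : 0 < ρ (θ t) := hρpos _ (hmaps ht)
  have hne (t : ℝ) (ht : t ∈ Icc 0 (2 * π)) : ρ (θ t) ≠ 0 := (hpos t ht).ne'
  have hθ' (t : ℝ) (ht : t ∈ Icc 0 (2 * π)) := hθ.hasDerivWithinAt hρ hρpos ht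
  have hθ0 : θ 0 = 0 := hθ.apply_zero hθM.le
  have hθ2 : ContDiffOn ℝ 2 θ (Icc 0 (2 * π)) :=
    contDiffOn_succ_of_hasDerivWithinAt_inv_comp hs hmaps hne hθ' 1 (hρ2.of_le (by norm_num))
  have hρθ0 := (hρ _ (hmaps h0)).hasDerivWithinAt
  refine ⟨θ, hθ, fun φ hφ => hφ.eqOn hθM.le hρ hρpos hθ, by simp [kepV₁, hθ0, hρ0],
    by simp [kepV₂, hθ0, hρ0], ?_, ?_,
    exists_continuousOn_potential_of_wronskian_eq hs (hρ2.kepV₁ hθ2 hmaps hne)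
      (hρ2.kepV₂ hθ2 hmaps hne)
      (fun t ht => by rw [kepV₁_sq_add_kepV₂_sq (hpos t ht).le]; exact hne t ht) hθ.2.2.2⟩
  · rw [(hasDerivWithinAt_kepV₁ hρθ0 (hθ' 0 h0) hmaps (hpos 0 h0)).derivWithin (hs 0 h0)]
    simp [hθ0, hρ0, hρ'0]
  · rw [(hasDerivWithinAt_kepV₂ hρθ0 (hθ' 0 h0) hmaps (hpos 0 h0)).derivWithin (hs 0 h0)]
    simp [hθ0, hρ0, hρ'0]
end
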